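/- Let 2 ≤ a < b and R_a ⊆ V^{⊗a}, R_b ⊆ V^{⊗b}. For 2 ≤ m ≤ a−1 and 2 ≤ h ≤ b−1, the inclusions (V^{⊗m}⊗R_a) ∩ (R_a⊗V^{⊗m}) ⊆ V^{⊗(m-1)}⊗R_a⊗V and (V^{⊗h}⊗R_b) ∩ (R_b⊗V^{⊗h}) ⊆ V^{⊗(h-1)}⊗R_b⊗V hold if and only if the equalities (V^{⊗m}⊗R_a) ∩ (R_a⊗V^{⊗m}) = J̄_{a+m}^a and (V^{⊗h}⊗R_b) ∩ (R_b⊗V^{⊗h}) = J̄_{b+h}^b are satisfied. -/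

import Mathlib

/-!
We model the tensor algebra `T(V)` on a finite-dimensional vector space `V` (with basis
`ι`) as the monoid algebra on the free monoid on `ι`; the tensor power `V^{⊗n}` is the
span `Wpow n` of the words of length `n`, and products of subspaces
(`V^{⊗j} ⊗ R ⊗ V^{⊗m}`, etc.) are products of submodules inside this algebra.
-/

noncomputable section
open scoped TensorProduct

namespace MK

variable (k : Type) [Field k] (ι : Type)

/-- The tensor algebra `T(V)` on the vector space `V` with basis `ι`. -/
abbrev T := MonoidAlgebra k (FreeMonoid ι)

/-- The basis element of `T(V)` corresponding to a word. -/
def word (w : FreeMonoid ι) : T k ι := MonoidAlgebra.of k (FreeMonoid ι) w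

/-- The tensor power `V^{⊗n}` inside `T(V)`. -/
def Wpow (n : ℕ) : Submodule k (T k ι) :=
  Submodule.span k {x | ∃ w : FreeMonoid ι, w.length = n ∧ x = word k ι w}

/-- `J̄_n^s = ∩_{j=0}^{n-s} V^{⊗j} ⊗ R_s ⊗ V^{⊗(n-s-j)}` for `n ≥ s`. -/
def Jbar (Rs : Submodule k (T k ι)) (s n : ℕ) : Submodule k (T k ι) :=
  ⨅ j ∈ Finset.range (n - s + 1), Wpow k ι j * Rs * Wpow k ι (n - s - j)

/-!
Write `I_m = (V^{⊗m}⊗R) ∩ (R⊗V^{⊗m})`. The key fact is that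
`(A⊗V^{⊗p}) ∩ (B⊗V^{⊗p}) = (A ∩ B)⊗V^{⊗p}` for arbitrary subspaces `A`, `B`: an element of
`A⊗V^{⊗p}` is `∑_{|w| = p} x_w ⊗ w`, and each `x_w` is recovered by stripping the suffix `w`.
Assuming the inclusions `I_i ⊆ V^{⊗(i-1)}⊗R⊗V` for `i ≤ m`, descending induction on `j` gives
`I_m ⊆ V^{⊗j}⊗R⊗V^{⊗(m-j)}`: intersecting `I_m ⊆ V^{⊗(j+1)}⊗R⊗V^{⊗(m-j-1)}` with
`I_m ⊆ R⊗V^{⊗(j+1)}⊗V^{⊗(m-j-1)}` yields `I_m ⊆ I_{j+1}⊗V^{⊗(m-j-1)} ⊆ V^{⊗j}⊗R⊗V^{⊗(m-j)}`.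
Hence `I_m ⊆ J̄_{a+m}`; the reverse inclusion uses only the terms `j = 0, m` of `J̄_{a+m}`, and the
converse implication is its term `j = m - 1`.
-/

theorem _root_.FreeMonoid.exists_eq_mul_of_length_eq_add {α : Type*} {w : FreeMonoid α}
    {m n : ℕ} (hw : w.length = m + n) :
    ∃ u v : FreeMonoid α, u.length = m ∧ v.length = n ∧ w = u * v := by
  have hw' : w.toList.length = m + n := hw
  refine ⟨.ofList (w.toList.take m), .ofList (w.toList.drop m), by simp [FreeMonoid.length, hw'],
    by simp [FreeMonoid.length, hw'], ?_⟩
  rw [← FreeMonoid.ofList_append, List.take_append_drop, FreeMonoid.ofList_toList]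

theorem _root_.FreeMonoid.mul_ne_mul_of_length_eq {α : Type*} {v w : FreeMonoid α}
    (hvw : v.length = w.length) (hne : v ≠ w) (u u' : FreeMonoid α) : u * v ≠ u' * w :=
  fun h => hne (List.append_inj' (congrArg FreeMonoid.toList h) hvw).2

theorem _root_.FreeMonoid.finite_setOf_length_eq (α : Type*) [Finite α] (p : ℕ) :
    {w : FreeMonoid α | w.length = p}.Finite :=
  List.finite_length_eq α p

section

variable {k ι}

theorem word_mul (u v : FreeMonoid ι) : word k ι (u * v) = word k ι u * word k ι v :=
  map_mul (MonoidAlgebra.of k (FreeMonoid ι)) u v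

theorem word_mem_wpow {n : ℕ} {w : FreeMonoid ι} (h : w.length = n) : word k ι w ∈ Wpow k ι n :=
  Submodule.subset_span ⟨w, h, rfl⟩

theorem wpow_zero : Wpow k ι 0 = 1 := by
  rw [Wpow, Submodule.one_eq_span, ← Set.image_singleton]
  congr 1
  ext x
  simp [FreeMonoid.length_eq_zero, word, MonoidAlgebra.one_def]

theorem wpow_mul (m n : ℕ) : Wpow k ι m * Wpow k ι n = Wpow k ι (m + n) := by
  rw [Wpow, Wpow, Wpow, Submodule.span_mul_span]
  congr 1
  ext x
  simp only [Set.mem_mul, Set.mem_ofPred_eq]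
  constructor
  · rintro ⟨_, ⟨u, rfl, rfl⟩, _, ⟨v, rfl, rfl⟩, rfl⟩
    exact ⟨u * v, FreeMonoid.length_mul u v, (word_mul u v).symm⟩
  · rintro ⟨w, hw, rfl⟩
    obtain ⟨u, v, hu, hv, rfl⟩ := FreeMonoid.exists_eq_mul_of_length_eq_add hw
    exact ⟨_, ⟨u, hu, rfl⟩, _, ⟨v, hv, rfl⟩, (word_mul u v).symm⟩

theorem mul_wpow_le_of_mul_word_mem {A P : Submodule k (T k ι)} {p : ℕ}
    (h : ∀ a ∈ A, ∀ v : FreeMonoid ι, v.length = p → a * word k ι v ∈ P) :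
    A * Wpow k ι p ≤ P :=
  Submodule.mul_le.2 fun a ha => Submodule.span_le (p := P.comap (LinearMap.mulLeft k a)).2
    (by rintro _ ⟨v, hv, rfl⟩; exact h a ha v hv)

def stripSuffix (w : FreeMonoid ι) : T k ι →ₗ[k] T k ι :=
  (MonoidAlgebra.coeffLinearEquiv k).symm.toLinearMap ∘ₗ
    Finsupp.lcomapDomain (· * w) (mul_left_injective w) ∘ₗ
    (MonoidAlgebra.coeffLinearEquiv k).toLinearMap

theorem coeff_stripSuffix (w u : FreeMonoid ι) (x : T k ι) :
    (stripSuffix w x).coeff u = x.coeff (u * w) :=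
  rfl

theorem stripSuffix_mul_word_self (w : FreeMonoid ι) (s : T k ι) :
    stripSuffix w (s * word k ι w) = s := by
  ext u
  rw [coeff_stripSuffix, word, MonoidAlgebra.of_apply,
    MonoidAlgebra.coeff_mul_single_eq_coeff_mul u fun _ _ => mul_left_inj w, mul_one]

theorem stripSuffix_mul_word_of_ne {v w : FreeMonoid ι} (hvw : v.length = w.length) (hne : v ≠ w)
    (s : T k ι) : stripSuffix w (s * word k ι v) = 0 := by
  ext u
  rw [coeff_stripSuffix, word, MonoidAlgebra.of_apply,
    MonoidAlgebra.coeff_mul_single_of_forall_mul_ne _ _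
      fun d => FreeMonoid.mul_ne_mul_of_length_eq hvw hne d u]
  rfl

theorem stripSuffix_mem {A : Submodule k (T k ι)} {p : ℕ} {w : FreeMonoid ι}
    (hw : w.length = p) {x : T k ι} (hx : x ∈ A * Wpow k ι p) : stripSuffix w x ∈ A := by
  refine mul_wpow_le_of_mul_word_mem (P := A.comap (stripSuffix w)) (fun a ha v hv => ?_) hx
  obtain rfl | hne := eq_or_ne v w
  · simpa [stripSuffix_mul_word_self] using ha
  · simp [stripSuffix_mul_word_of_ne (hv.trans hw.symm) hne]

theorem sum_stripSuffix_mul_word [Finite ι] {A : Submodule k (T k ι)} {p : ℕ} {x : T k ι}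
    (hx : x ∈ A * Wpow k ι p) :
    ∑ w ∈ (FreeMonoid.finite_setOf_length_eq ι p).toFinset, stripSuffix w x * word k ι w = x := by
  let f : T k ι →ₗ[k] T k ι := ∑ w ∈ (FreeMonoid.finite_setOf_length_eq ι p).toFinset,
    LinearMap.mulRight k (word k ι w) ∘ₗ stripSuffix w
  suffices A * Wpow k ι p ≤ LinearMap.eqLocus f LinearMap.id by
    simpa [f] using LinearMap.mem_eqLocus.1 (this hx)
  refine mul_wpow_le_of_mul_word_mem fun a _ v hv => ?_
  rw [LinearMap.mem_eqLocus, LinearMap.id_apply, LinearMap.sum_apply,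
    Finset.sum_eq_single v]
  · simp [stripSuffix_mul_word_self]
  · intro w hw hne
    have hw : w.length = p := (FreeMonoid.finite_setOf_length_eq ι p).mem_toFinset.1 hw
    simp [stripSuffix_mul_word_of_ne (hv.trans hw.symm) hne.symm]
  · simp [hv]

theorem inf_mul_wpow [Finite ι] (A B : Submodule k (T k ι)) (p : ℕ) :
    (A ⊓ B) * Wpow k ι p = A * Wpow k ι p ⊓ B * Wpow k ι p := by
  refine le_antisymm (le_inf (mul_le_mul_left inf_le_left _) (mul_le_mul_left inf_le_right _)) ?_
  rintro x ⟨hxA, hxB⟩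
  rw [← sum_stripSuffix_mul_word hxA]
  refine Submodule.sum_mem _ fun w hw => ?_
  have hw : w.length = p := (FreeMonoid.finite_setOf_length_eq ι p).mem_toFinset.1 hw
  exact Submodule.mul_mem_mul ⟨stripSuffix_mem hw hxA, stripSuffix_mem hw hxB⟩ (word_mem_wpow hw)

theorem inf_le_wpow_mul_mul_wpow [Finite ι] (R : Submodule k (T k ι)) {m : ℕ}
    (H : ∀ i, 2 ≤ i → i ≤ m →
      Wpow k ι i * R ⊓ R * Wpow k ι i ≤ Wpow k ι (i - 1) * R * Wpow k ι 1)
    {j : ℕ} (hj : j ≤ m) :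
    Wpow k ι m * R ⊓ R * Wpow k ι m ≤ Wpow k ι j * R * Wpow k ι (m - j) := by
  induction hj using Nat.decreasingInduction with
  | self => simp [wpow_zero]
  | of_succ j hjm ih =>
    have H_succ : Wpow k ι (j + 1) * R ⊓ R * Wpow k ι (j + 1) ≤ Wpow k ι j * R * Wpow k ι 1 := by
      rcases j with _ | j
      · simp [wpow_zero]
      · exact H (j + 2) (by omega) hjm
    have hsplit : Wpow k ι m = Wpow k ι (j + 1) * Wpow k ι (m - (j + 1)) := by
      rw [wpow_mul, Nat.add_sub_cancel' hjm]
    calc Wpow k ι m * R ⊓ R * Wpow k ι m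
        ≤ Wpow k ι (j + 1) * R * Wpow k ι (m - (j + 1)) ⊓
            R * Wpow k ι (j + 1) * Wpow k ι (m - (j + 1)) := by
          rw [mul_assoc R, ← hsplit]
          exact le_inf ih inf_le_right
      _ = (Wpow k ι (j + 1) * R ⊓ R * Wpow k ι (j + 1)) * Wpow k ι (m - (j + 1)) :=
          (inf_mul_wpow _ _ _).symm
      _ ≤ Wpow k ι j * R * Wpow k ι 1 * Wpow k ι (m - (j + 1)) := mul_le_mul_left H_succ _
      _ = Wpow k ι j * R * Wpow k ι (m - j) := by
          rw [mul_assoc _ (Wpow k ι 1), wpow_mul]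
          congr 2
          omega

theorem jbar_add (R : Submodule k (T k ι)) (a m : ℕ) :
    Jbar k ι R a (a + m) = ⨅ j ∈ Finset.range (m + 1), Wpow k ι j * R * Wpow k ι (m - j) := by
  rw [Jbar, Nat.add_sub_cancel_left]

theorem inf_eq_jbar [Finite ι] (R : Submodule k (T k ι)) (a : ℕ) {m : ℕ}
    (H : ∀ i, 2 ≤ i → i ≤ m →
      Wpow k ι i * R ⊓ R * Wpow k ι i ≤ Wpow k ι (i - 1) * R * Wpow k ι 1) :
    Wpow k ι m * R ⊓ R * Wpow k ι m = Jbar k ι R a (a + m) := by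
  rw [jbar_add]
  refine le_antisymm (le_iInf₂ fun j hj => inf_le_wpow_mul_mul_wpow R H ?_) (le_inf ?_ ?_)
  · exact Nat.lt_succ_iff.1 (Finset.mem_range.1 hj)
  · exact (iInf₂_le m (Finset.self_mem_range_succ m)).trans_eq (by simp [wpow_zero])
  · exact (iInf₂_le 0 (by simp)).trans_eq (by simp [wpow_zero])

theorem inf_le_of_eq_jbar (R : Submodule k (T k ι)) (a : ℕ) {m : ℕ} (hm : 1 ≤ m)
    (h : Wpow k ι m * R ⊓ R * Wpow k ι m = Jbar k ι R a (a + m)) :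
    Wpow k ι m * R ⊓ R * Wpow k ι m ≤ Wpow k ι (m - 1) * R * Wpow k ι 1 := by
  rw [h, jbar_add]
  exact (iInf₂_le (m - 1) (by simp)).trans_eq (by rw [Nat.sub_sub_self hm])

theorem forall_inf_le_iff_forall_inf_eq_jbar [Finite ι] (R : Submodule k (T k ι)) (a n : ℕ) :
    (∀ m, 2 ≤ m → m ≤ n →
        Wpow k ι m * R ⊓ R * Wpow k ι m ≤ Wpow k ι (m - 1) * R * Wpow k ι 1) ↔
      ∀ m, 2 ≤ m → m ≤ n → Wpow k ι m * R ⊓ R * Wpow k ι m = Jbar k ι R a (a + m) :=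
  ⟨fun H _ _ hmn => inf_eq_jbar R a fun i hi him => H i hi (him.trans hmn),
    fun H m hm hmn => inf_le_of_eq_jbar R a (by omega) (H m hm hmn)⟩

end

theorem inclusions_iff_eq_jbar [Fintype ι] (a b : ℕ)
    (Ra Rb : Submodule k (T k ι)) :
    ((∀ m, 2 ≤ m → m ≤ a - 1 →
        (Wpow k ι m * Ra) ⊓ (Ra * Wpow k ι m) ≤ Wpow k ι (m - 1) * Ra * Wpow k ι 1) ∧
      (∀ h, 2 ≤ h → h ≤ b - 1 →
        (Wpow k ι h * Rb) ⊓ (Rb * Wpow k ι h) ≤ Wpow k ι (h - 1) * Rb * Wpow k ι 1)) ↔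
    ((∀ m, 2 ≤ m → m ≤ a - 1 →
        (Wpow k ι m * Ra) ⊓ (Ra * Wpow k ι m) = Jbar k ι Ra a (a + m)) ∧
      (∀ h, 2 ≤ h → h ≤ b - 1 →
        (Wpow k ι h * Rb) ⊓ (Rb * Wpow k ι h) = Jbar k ι Rb b (b + h))) :=
  and_congr (forall_inf_le_iff_forall_inf_eq_jbar Ra a (a - 1))
    (forall_inf_le_iff_forall_inf_eq_jbar Rb b (b - 1))

end MK
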